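/- Let f : H → ℝ be continuous convex, S ⊆ H compact convex nonempty, and {x_k} generated by projected subgradient ascent x_{k+1} = P_S(x_k + η_k g_k), g_k ∈ ∂f(x_k), with 0 < liminf η_k and limsup η_k < ∞. Then every accumulation point x̃ of {x_k} is a first-order stationary point: there exists g ∈ ∂f(x̃) with ⟨g, z − x̃⟩ ≤ 0 for all z ∈ S. -/

import Mathlib

open RealInnerProductSpace Filter Topology

/-!
Projected ascent raises `f` by at least `‖x_{k+1} - x_k‖² / η_k` per step and `f` is bounded on
the compact set `S`, so with `η_k` bounded above the steps `x_{k+1} - x_k` tend to zero. Near the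
accumulation point `x̃` the subgradients are bounded (`f` is continuous there), so along the
subsequence they have a weak cluster point `g̃`. Passing to the limit, weakly in `g` and strongly
in `x`, in the subgradient inequality gives `g̃ ∈ ∂f(x̃)`; in the variational inequality of the
projection, `η_k ⟪g_k, z - x_{k+1}⟫ ≤ ⟪x_{k+1} - x_k, z - x_{k+1}⟫`, with `η_k` bounded below,
it gives `⟪g̃, z - x̃⟫ ≤ 0` for `z ∈ S`.
-/

section

variable {H : Type*} [NormedAddCommGroup H] [InnerProductSpace ℝ H]

def HasSubgradient (f : H → ℝ) (g x : H) : Prop :=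
  ∀ z, f x + ⟪g, z - x⟫ ≤ f z

theorem HasSubgradient.mul_norm_le {f : H → ℝ} {g y : H} {r c : ℝ} (hg : HasSubgradient f g y)
    (hr : 0 ≤ r) (hc : ∀ z ∈ Metric.closedBall y r, f z ≤ f y + c) : r * ‖g‖ ≤ c := by
  rcases eq_or_ne g 0 with rfl | hg0
  · simpa using hc y (Metric.mem_closedBall_self hr)
  have hgpos : 0 < ‖g‖ := norm_pos_iff.mpr hg0
  set z := y + (r / ‖g‖) • g
  have hzy : z - y = (r / ‖g‖) • g := add_sub_cancel_left _ _
  have hz : z ∈ Metric.closedBall y r := by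
    rw [Metric.mem_closedBall, dist_eq_norm, hzy, norm_smul, Real.norm_of_nonneg (by positivity),
      div_mul_cancel₀ _ hgpos.ne']
  have hinner : ⟪g, z - y⟫ = r * ‖g‖ := by
    rw [hzy, real_inner_smul_right, real_inner_self_eq_norm_sq]
    field_simp
  linarith [hg z, hc z hz]

theorem ContinuousAt.exists_eventually_norm_le_of_hasSubgradient {f : H → ℝ} {xt : H}
    (hf : ContinuousAt f xt) :
    ∃ M, ∀ᶠ y in 𝓝 xt, ∀ g, HasSubgradient f g y → ‖g‖ ≤ M := by
  obtain ⟨δ, hδ, hfδ⟩ := Metric.continuousAt_iff.mp hf 1 one_pos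
  refine ⟨4 / δ, eventually_of_mem (Metric.ball_mem_nhds xt (half_pos hδ)) fun y hy g hg => ?_⟩
  have hy' := hfδ (Metric.mem_ball.mp hy |>.trans (half_lt_self hδ))
  have hbound : ∀ z ∈ Metric.closedBall y (δ / 2), f z ≤ f y + 2 := by
    intro z hz
    have hzt : dist z xt < δ := by
      linarith [dist_triangle z y xt, Metric.mem_closedBall.mp hz, Metric.mem_ball.mp hy]
    have hz' := hfδ hzt
    rw [Real.dist_eq, abs_lt] at hz' hy'
    linarith
  have := hg.mul_norm_le (half_pos hδ).le hbound
  rw [le_div_iff₀ hδ]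
  linarith

theorem HasSubgradient.of_tendsto {ι : Type*} {l : Filter ι} [l.NeBot] {f : H → ℝ} {x g : ι → H}
    {xt gt : H} (hf : ContinuousAt f xt) (hx : Tendsto x l (𝓝 xt))
    (hinner : ∀ z, Tendsto (fun i => ⟪g i, z - x i⟫) l (𝓝 ⟪gt, z - xt⟫))
    (hsub : ∀ i, HasSubgradient f (g i) (x i)) : HasSubgradient f gt xt := fun z =>
  le_of_tendsto' ((hf.tendsto.comp hx).add (hinner z)) fun i => hsub i z

theorem inner_sub_le_zero_of_forall_norm_sub_le {S : Set H} (hS : Convex ℝ S) {u p z : H}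
    (hp : p ∈ S) (hmin : ∀ w ∈ S, ‖u - p‖ ≤ ‖u - w‖) (hz : z ∈ S) : ⟪u - p, z - p⟫ ≤ 0 := by
  have : Nonempty S := ⟨⟨p, hp⟩⟩
  have hbdd : BddBelow (Set.range fun w : S => ‖u - w‖) :=
    ⟨0, by rintro _ ⟨w, rfl⟩; exact norm_nonneg _⟩
  refine (norm_eq_iInf_iff_real_inner_le_zero hS hp).mp ?_ z hz
  exact le_antisymm (le_ciInf fun w => hmin w w.2) (ciInf_le hbdd ⟨p, hp⟩)

theorem tendsto_inner_of_eventually_norm_le {ι : Type*} {l : Filter ι} {g w : ι → H} {gt wt : H}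
    {M : ℝ} (hg : ∀ᶠ i in l, ‖g i‖ ≤ M) (hweak : Tendsto (fun i => ⟪g i, wt⟫) l (𝓝 ⟪gt, wt⟫))
    (hw : Tendsto w l (𝓝 wt)) : Tendsto (fun i => ⟪g i, w i⟫) l (𝓝 ⟪gt, wt⟫) := by
  have hsmall : Tendsto (fun i => ⟪g i, w i - wt⟫) l (𝓝 0) := by
    have hMw : Tendsto (fun i => M * ‖w i - wt‖) l (𝓝 0) := by
      simpa using (tendsto_iff_norm_sub_tendsto_zero.mp hw).const_mul M
    refine squeeze_zero_norm' ?_ hMw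
    filter_upwards [hg] with i hi
    exact (norm_inner_le_norm _ _).trans (mul_le_mul_of_nonneg_right hi (norm_nonneg _))
  simpa [← inner_add_right] using hweak.add hsmall

/-- Banach–Alaoglu in the dual, transported back through the Riesz isomorphism `toDual`. -/
theorem exists_ultrafilter_weak_tendsto_of_eventually_norm_le [CompleteSpace H] {ι : Type*}
    {l : Filter ι} [l.NeBot] {g : ι → H} {M : ℝ} (hg : ∀ᶠ i in l, ‖g i‖ ≤ M) :
    ∃ (U : Ultrafilter ι) (gt : H), ↑U ≤ l ∧ ∀ y, Tendsto (fun i => ⟪g i, y⟫) U (𝓝 ⟪gt, y⟫) := by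
  set U := Ultrafilter.of l
  have hUl : ↑U ≤ l := Ultrafilter.of_le l
  set T : ι → WeakDual ℝ H := fun i => StrongDual.toWeakDual (InnerProductSpace.toDual ℝ H (g i))
  have hball : ∀ᶠ i in (U : Filter ι),
      T i ∈ WeakDual.toStrongDual ⁻¹' Metric.closedBall (0 : StrongDual ℝ H) M := by
    filter_upwards [hg.filter_mono hUl] with i hi
    simpa [T] using hi
  obtain ⟨ψ, -, hψ⟩ := (WeakDual.isCompact_closedBall 0 M).ultrafilter_le_nhds (U.map T)
    (by rwa [Ultrafilter.coe_map, le_principal_iff, mem_map])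
  refine ⟨U, (InnerProductSpace.toDual ℝ H).symm (WeakDual.toStrongDual ψ), hUl, fun y => ?_⟩
  rw [InnerProductSpace.toDual_symm_apply]
  exact ((WeakDual.eval_continuous y).tendsto ψ).comp (by rwa [Tendsto, ← Ultrafilter.coe_map])

theorem exists_ultrafilter_tendsto_inner_of_eventually_norm_le [CompleteSpace H] {ι : Type*}
    {l : Filter ι} [l.NeBot] {g : ι → H} {M : ℝ} (hg : ∀ᶠ i in l, ‖g i‖ ≤ M) :
    ∃ (U : Ultrafilter ι) (gt : H), ↑U ≤ l ∧ ∀ (w : ι → H) (wt : H), Tendsto w l (𝓝 wt) →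
      Tendsto (fun i => ⟪g i, w i⟫) U (𝓝 ⟪gt, wt⟫) := by
  obtain ⟨U, gt, hUl, hweak⟩ := exists_ultrafilter_weak_tendsto_of_eventually_norm_le hg
  exact ⟨U, gt, hUl, fun w wt hw =>
    tendsto_inner_of_eventually_norm_le (hg.filter_mono hUl) (hweak wt) (hw.mono_left hUl)⟩

structure IsProjectedSubgradientAscent (S : Set H) (f : H → ℝ) (x : ℕ → H) (η : ℕ → ℝ)
    (g : ℕ → H) : Prop where
  step_pos : ∀ k, 0 < η k
  hasSubgradient : ∀ k, HasSubgradient f (g k) (x k)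
  mem : ∀ k, x k ∈ S
  norm_sub_succ_le : ∀ k, ∀ z ∈ S, ‖x k + η k • g k - x (k + 1)‖ ≤ ‖x k + η k • g k - z‖

namespace IsProjectedSubgradientAscent

variable {S : Set H} {f : H → ℝ} {x : ℕ → H} {η : ℕ → ℝ} {g : ℕ → H}
  (hA : IsProjectedSubgradientAscent S f x η g) (hS : Convex ℝ S)
include hA hS

theorem mul_inner_le (k : ℕ) {z : H} (hz : z ∈ S) :
    η k * ⟪g k, z - x (k + 1)⟫ ≤ ⟪x (k + 1) - x k, z - x (k + 1)⟫ := by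
  have hvi :=
    inner_sub_le_zero_of_forall_norm_sub_le hS (hA.mem (k + 1)) (hA.norm_sub_succ_le k) hz
  rw [show x k + η k • g k - x (k + 1) = η k • g k - (x (k + 1) - x k) by abel,
    inner_sub_left, real_inner_smul_left] at hvi
  linarith

theorem sq_norm_sub_le (k : ℕ) : ‖x (k + 1) - x k‖ ^ 2 ≤ η k * (f (x (k + 1)) - f (x k)) := by
  have hvi := hA.mul_inner_le hS k (hA.mem k)
  rw [← neg_sub (x (k + 1)) (x k), inner_neg_right, inner_neg_right,
    real_inner_self_eq_norm_sq] at hvi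
  have hsub := hA.hasSubgradient k (x (k + 1))
  nlinarith [hA.step_pos k]

theorem monotone : Monotone (f ∘ x) :=
  monotone_nat_of_le_succ fun k => by
    have := (sq_nonneg _).trans (hA.sq_norm_sub_le hS k)
    have := nonneg_of_mul_nonneg_right this (hA.step_pos k)
    simp only [Function.comp_apply]
    linarith

theorem tendsto_norm_succ_sub (hcomp : IsCompact S) (hf : ContinuousOn f S) {C : ℝ}
    (hC : ∀ᶠ k in atTop, η k ≤ C) : Tendsto (fun k => ‖x (k + 1) - x k‖) atTop (𝓝 0) := by
  have hbdd : BddAbove (Set.range (f ∘ x)) :=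
    (hcomp.bddAbove_image hf).mono <|
      Set.range_subset_iff.mpr fun k => Set.mem_image_of_mem f (hA.mem k)
  have hlim := tendsto_atTop_ciSup (hA.monotone hS) hbdd
  have hincr : Tendsto (fun k => f (x (k + 1)) - f (x k)) atTop (𝓝 0) := by
    simpa using (hlim.comp (tendsto_add_atTop_nat 1)).sub hlim
  have hsq : Tendsto (fun k => ‖x (k + 1) - x k‖ ^ 2) atTop (𝓝 0) := by
    refine squeeze_zero' (Eventually.of_forall fun k => sq_nonneg _) ?_
      (by simpa using hincr.const_mul C)
    filter_upwards [hC] with k hk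
    have hmono := hA.monotone hS (Nat.le_succ k)
    simp only [Function.comp_apply] at hmono
    exact (hA.sq_norm_sub_le hS k).trans (mul_le_mul_of_nonneg_right hk (by linarith))
  simpa [Real.sqrt_sq (norm_nonneg _)] using hsq.sqrt

theorem inner_le_div {ε : ℝ} (hε : 0 < ε) {k : ℕ} (hεk : ε ≤ η k) {z : H} (hz : z ∈ S) :
    ⟪g k, z - x (k + 1)⟫ ≤ ‖x (k + 1) - x k‖ * ‖z - x (k + 1)‖ / ε := by
  have h := (hA.mul_inner_le hS k hz).trans (real_inner_le_norm _ _)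
  rw [le_div_iff₀ hε]
  rcases le_or_gt ⟪g k, z - x (k + 1)⟫ 0 with hneg | hpos
  · nlinarith [mul_nonneg (norm_nonneg (x (k + 1) - x k)) (norm_nonneg (z - x (k + 1)))]
  · nlinarith

end IsProjectedSubgradientAscent

end

theorem pga_accumulation_first_order_stationary_general
    {H : Type*} [NormedAddCommGroup H] [InnerProductSpace ℝ H] [CompleteSpace H]
    (S : Set H) (hcomp : IsCompact S) (hconv : Convex ℝ S)
    (f : H → ℝ) (hfc : Continuous f)
    (x : ℕ → H) (η : ℕ → ℝ) (g : ℕ → H)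
    (hx0 : x 0 ∈ S)
    (hηlb : ∃ ε > (0 : ℝ), ∀ᶠ k in atTop, ε ≤ η k)
    (hηub : ∃ C : ℝ, ∀ᶠ k in atTop, η k ≤ C)
    (hηpos : ∀ k, 0 < η k)
    (hg : ∀ k, ∀ z : H, f (x k) + ⟪g k, z - x k⟫ ≤ f z)
    (hxS : ∀ k, x (k + 1) ∈ S)
    (hproj : ∀ k, ∀ z ∈ S, ‖x k + η k • g k - x (k + 1)‖ ≤ ‖x k + η k • g k - z‖)
    (xt : H) (φ : ℕ → ℕ) (hφ : StrictMono φ)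
    (hacc : Tendsto (fun j => x (φ j)) atTop (nhds xt)) :
    ∃ gt : H, (∀ z : H, f xt + ⟪gt, z - xt⟫ ≤ f z) ∧ ∀ z ∈ S, ⟪gt, z - xt⟫ ≤ 0 := by
  obtain ⟨ε, hε, hεη⟩ := hηlb
  obtain ⟨C, hηC⟩ := hηub
  have hA : IsProjectedSubgradientAscent S f x η g :=
    ⟨hηpos, hg, fun k => k.casesOn hx0 hxS, hproj⟩
  have hstep := (hA.tendsto_norm_succ_sub hconv hcomp hfc.continuousOn hηC).comp hφ.tendsto_atTop
  have hacc_succ : Tendsto (fun j => x (φ j + 1)) atTop (𝓝 xt) := by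
    simpa using hacc.add (tendsto_zero_iff_norm_tendsto_zero.mpr hstep)
  obtain ⟨M, hM⟩ := hfc.continuousAt.exists_eventually_norm_le_of_hasSubgradient (xt := xt)
  obtain ⟨U, gt, hUle, hU⟩ := exists_ultrafilter_tendsto_inner_of_eventually_norm_le
    ((hacc.eventually hM).mono fun j hj => hj _ (hg (φ j)))
  refine ⟨gt, HasSubgradient.of_tendsto hfc.continuousAt (hacc.mono_left hUle)
    (fun z => hU _ _ (tendsto_const_nhds.sub hacc)) (fun j => hg (φ j)), fun z hz => ?_⟩
  have hbound : ∀ᶠ j in atTop,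
      ⟪g (φ j), z - x (φ j + 1)⟫ ≤ ‖x (φ j + 1) - x (φ j)‖ * ‖z - x (φ j + 1)‖ / ε :=
    (hφ.tendsto_atTop.eventually hεη).mono fun j hj => hA.inner_le_div hconv hε hj hz
  have hbound_lim :
      Tendsto (fun j => ‖x (φ j + 1) - x (φ j)‖ * ‖z - x (φ j + 1)‖ / ε) atTop (𝓝 0) := by
    simpa using (hstep.mul (tendsto_const_nhds.sub hacc_succ).norm).div_const ε
  exact le_of_tendsto_of_tendsto (hU _ _ (tendsto_const_nhds.sub hacc_succ))
    (hbound_lim.mono_left hUle) (hbound.filter_mono hUle)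

/-- For continuous convex `f` on a compact convex `S`, projected subgradient ascent with
step sizes bounded away from `0` (positive liminf) and bounded above (finite limsup) has
all its accumulation points first-order stationary: some subgradient of `f` there lies in
the normal cone of `S`. -/
theorem pga_accumulation_first_order_stationary
    {H : Type*} [NormedAddCommGroup H] [InnerProductSpace ℝ H] [CompleteSpace H]
    (S : Set H) (hne : S.Nonempty) (hcomp : IsCompact S) (hconv : Convex ℝ S)
    (f : H → ℝ) (hf : ConvexOn ℝ Set.univ f) (hfc : Continuous f)
    (x : ℕ → H) (η : ℕ → ℝ) (g : ℕ → H)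
    (hx0 : x 0 ∈ S)
    (hηlb : ∃ ε > (0 : ℝ), ∀ᶠ k in atTop, ε ≤ η k)
    (hηub : ∃ C : ℝ, ∀ᶠ k in atTop, η k ≤ C)
    (hηpos : ∀ k, 0 < η k)
    (hg : ∀ k, ∀ z : H, f (x k) + ⟪g k, z - x k⟫ ≤ f z)
    (hxS : ∀ k, x (k + 1) ∈ S)
    (hproj : ∀ k, ∀ z ∈ S, ‖x k + η k • g k - x (k + 1)‖ ≤ ‖x k + η k • g k - z‖)
    (xt : H) (φ : ℕ → ℕ) (hφ : StrictMono φ)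
    (hacc : Tendsto (fun j => x (φ j)) atTop (nhds xt)) :
    ∃ gt : H, (∀ z : H, f xt + ⟪gt, z - xt⟫ ≤ f z) ∧ ∀ z ∈ S, ⟪gt, z - xt⟫ ≤ 0 :=
  pga_accumulation_first_order_stationary_general S hcomp hconv f hfc x η g hx0 hηlb hηub hηpos hg
    hxS hproj xt φ hφ hacc
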